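/- Let μ be the bilinear skew-symmetric map on ℝ^7 with nonzero basis brackets [e1,e2]=e3, [e1,e3]=e4, [e1,e4]=e5, [e1,e5]=e6, [e1,e6]=e7, [e2,e3]=e6, [e2,e4]=e7, [e2,e5]=e7, [e3,e4]=-e7. Then μ satisfies the Jacobi identity, the space of derivations of (ℝ^7,μ) has dimension 10, and every derivation of (ℝ^7,μ) is nilpotent (i.e. (ℝ^7,μ) is characteristically nilpotent). -/

import Mathlib

open Finset

noncomputable section

/-- `ℝ⁷` with its standard basis and standard inner product. -/
abbrev V7 : Type := Fin 7 → ℝ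

/-- The standard basis vector `e i`. -/
def e (i : Fin 7) : V7 := Pi.single i 1

/-- The standard inner product on `ℝ⁷`. -/
def dot (x y : V7) : ℝ := ∑ i, x i * y i

/-- Structure constants built from a list of entries `(i, j, k, a)`, each meaning that
`μ (e i) (e j)` has component `a` along `e k` (and `μ (e j) (e i)` has component `-a`);
all unlisted basis brackets are `0`. -/
def toC (L : List (Fin 7 × Fin 7 × Fin 7 × ℝ)) (i j k : Fin 7) : ℝ :=
  (L.map fun t =>
      (if t.1 = i ∧ t.2.1 = j ∧ t.2.2.1 = k then t.2.2.2 else 0)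
    - (if t.1 = j ∧ t.2.1 = i ∧ t.2.2.1 = k then t.2.2.2 else 0)).sum

/-- The bilinear skew-symmetric map on `ℝ⁷` with structure constants `c`. -/
def br (c : Fin 7 → Fin 7 → Fin 7 → ℝ) (x y : V7) : V7 :=
  fun k => ∑ i, ∑ j, x i * y j * c i j k

lemma br_add_left (c : Fin 7 → Fin 7 → Fin 7 → ℝ) (x x' y : V7) :
    br c (x + x') y = br c x y + br c x' y := by
  funext k
  simp only [br, Pi.add_apply, ← Finset.sum_add_distrib]
  exact Finset.sum_congr rfl fun i _ => Finset.sum_congr rfl fun j _ => by ring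

lemma br_smul_left (c : Fin 7 → Fin 7 → Fin 7 → ℝ) (r : ℝ) (x y : V7) :
    br c (r • x) y = r • br c x y := by
  funext k
  simp only [br, Pi.smul_apply, smul_eq_mul, Finset.mul_sum]
  exact Finset.sum_congr rfl fun i _ => Finset.sum_congr rfl fun j _ => by ring

lemma br_add_right (c : Fin 7 → Fin 7 → Fin 7 → ℝ) (x y y' : V7) :
    br c x (y + y') = br c x y + br c x y' := by
  funext k
  simp only [br, Pi.add_apply, ← Finset.sum_add_distrib]
  exact Finset.sum_congr rfl fun i _ => Finset.sum_congr rfl fun j _ => by ring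

lemma br_smul_right (c : Fin 7 → Fin 7 → Fin 7 → ℝ) (r : ℝ) (x y : V7) :
    br c x (r • y) = r • br c x y := by
  funext k
  simp only [br, Pi.smul_apply, smul_eq_mul, Finset.mul_sum]
  exact Finset.sum_congr rfl fun i _ => Finset.sum_congr rfl fun j _ => by ring

lemma br_zero_left (c : Fin 7 → Fin 7 → Fin 7 → ℝ) (y : V7) : br c 0 y = 0 := by
  funext k; simp [br]

lemma br_zero_right (c : Fin 7 → Fin 7 → Fin 7 → ℝ) (x : V7) : br c x 0 = 0 := by
  funext k; simp [br]

/-- The space of derivations of the algebra `(ℝ⁷, br c)`, i.e. the linear maps `D` with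
`D (μ x y) = μ (D x) y + μ x (D y)` for all `x, y`, as a submodule of the endomorphisms. -/
def derivations (c : Fin 7 → Fin 7 → Fin 7 → ℝ) : Submodule ℝ (Module.End ℝ V7) where
  carrier := {D | ∀ x y, D (br c x y) = br c (D x) y + br c x (D y)}
  add_mem' := by
    intro D E hD hE x y
    simp only [LinearMap.add_apply, hD x y, hE x y, br_add_left, br_add_right]
    abel
  zero_mem' := by
    intro x y
    simp [br_zero_left, br_zero_right]
  smul_mem' := by
    intro r D hD x y
    simp only [LinearMap.smul_apply, hD x y, smul_add, br_smul_left, br_smul_right]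

/-- The Jacobi identity for the bracket `br c`. -/
def Jacobi (c : Fin 7 → Fin 7 → Fin 7 → ℝ) : Prop :=
  ∀ x y z : V7, br c (br c x y) z + br c (br c y z) x + br c (br c z x) y = 0

/-- Skew-symmetry of the bracket `br c`. -/
def Skew (c : Fin 7 → Fin 7 → Fin 7 → ℝ) : Prop :=
  ∀ x y : V7, br c x y = - br c y x

/-- The diagonal endomorphism `diag (a 1, …, a 7)` of `ℝ⁷`, `e i ↦ a i • e i`. -/
def diagL (a : Fin 7 → ℝ) : Module.End ℝ V7 :=
  LinearMap.pi fun i => a i • LinearMap.proj i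

/-- Structure constants of the bracket with nonzero basis brackets
`[e1,e2]=e3, [e1,e3]=e4, [e1,e4]=e5, [e1,e5]=e6, [e1,e6]=e7, [e2,e3]=e6, [e2,e4]=e7,
[e2,e5]=e7, [e3,e4]=-e7`. -/
def c0 : Fin 7 → Fin 7 → Fin 7 → ℝ :=
  toC [(0, 1, 2, (1:ℝ)),
   (0, 2, 3, 1),
   (0, 3, 4, 1),
   (0, 4, 5, 1),
   (0, 5, 6, 1),
   (1, 2, 5, 1),
   (1, 3, 6, 1),
   (1, 4, 6, 1),
   (2, 3, 6, -1)]

/-! Index `k` stands for the paper's `e_(k+1)`. Because `e (k + 1) = [e 0, e k]` for `1 ≤ k ≤ 5`,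
a derivation is determined by `D (e 0)` and `D (e 1)`. A handful of the derivation equations
force `D (e 0) 0 = D (e 1) 0 = D (e 1) 1 = 0` and `2 * D (e 1) 3 = D (e 0) 1`, which leaves ten
free coordinates, and every choice of them is realised by the explicit strictly lower triangular
matrix `derivMatrix`. So the derivations form a copy of `ℝ¹⁰`, all of them strictly lower
triangular, hence nilpotent. -/

theorem Matrix.isNilpotent_toLin'_of_strictLowerTriangular {R : Type*} [CommSemiring R] {n : ℕ}
    (M : Matrix (Fin n) (Fin n) R) (hM : ∀ i j, i ≤ j → M i j = 0) :
    IsNilpotent (Matrix.toLin' M) := by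
  have hpow : ∀ k x (i : Fin n), (i : ℕ) < k → (Matrix.toLin' M ^ k) x i = 0 := by
    intro k
    induction k with
    | zero => intro x i hi; omega
    | succ k ih =>
      intro x i hi
      rw [pow_succ', Module.End.mul_apply, Matrix.toLin'_apply]
      simp only [Matrix.mulVec, dotProduct]
      refine Finset.sum_eq_zero fun j _ => ?_
      rcases lt_or_ge j i with hji | hij
      · rw [ih x j (by omega), mul_zero]
      · rw [hM i j hij, zero_mul]
  exact ⟨n, LinearMap.ext fun x => funext fun i => hpow n x i i.isLt⟩

def bracket (x y : V7) : V7 :=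
  ![0, 0, x 0 * y 1 - x 1 * y 0, x 0 * y 2 - x 2 * y 0, x 0 * y 3 - x 3 * y 0,
    x 0 * y 4 - x 4 * y 0 + x 1 * y 2 - x 2 * y 1,
    x 0 * y 5 - x 5 * y 0 + x 1 * y 3 - x 3 * y 1 + x 1 * y 4 - x 4 * y 1 - x 2 * y 3 + x 3 * y 2]

theorem br_c0 : br c0 = bracket := by
  funext x y k
  fin_cases k <;> simp [br, c0, toC, Fin.sum_univ_seven, bracket] <;> ring

theorem skew_c0 : Skew c0 := by
  intro x y
  rw [br_c0]
  funext k
  fin_cases k <;> simp [bracket] <;> ring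

theorem jacobi_c0 : Jacobi c0 := by
  intro x y z
  rw [br_c0]
  funext k
  fin_cases k <;> simp [bracket] <;> ring

theorem mem_derivations_c0 {D : Module.End ℝ V7} :
    D ∈ derivations c0 ↔ ∀ x y, D (bracket x y) = bracket (D x) y + bracket x (D y) := by
  rw [← br_c0]; rfl

theorem e_apply (i j : Fin 7) : e i j = if j = i then 1 else 0 := Pi.single_apply i 1 j

theorem Module.End.ext_e {D E : Module.End ℝ V7} (h : ∀ k, D (e k) = E (e k)) : D = E :=
  (Pi.basisFun ℝ (Fin 7)).ext fun k => by simpa [e] using h k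

theorem Module.End.apply_eq_sum_e (D : Module.End ℝ V7) (v : V7) (m : Fin 7) :
    D v m = ∑ k, v k * D (e k) m := by
  conv_lhs => rw [← (Pi.basisFun ℝ (Fin 7)).sum_repr v]
  simp [e]

theorem Matrix.toLin'_apply_e (M : Matrix (Fin 7) (Fin 7) ℝ) (k : Fin 7) :
    Matrix.toLin' M (e k) = fun m => M m k := by
  ext m
  simp [e]

theorem e_succ_eq_bracket {k : Fin 7} (h0 : k ≠ 0) (h6 : k ≠ 6) :
    e (k + 1) = bracket (e 0) (e k) := by
  funext m
  fin_cases k <;> fin_cases m <;> simp_all [bracket, e_apply]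

theorem derivation_ext {D E : Module.End ℝ V7} (hD : D ∈ derivations c0)
    (hE : E ∈ derivations c0) (h0 : D (e 0) = E (e 0)) (h1 : D (e 1) = E (e 1)) : D = E := by
  have step : ∀ k : Fin 7, k ≠ 0 → k ≠ 6 → D (e k) = E (e k) → D (e (k + 1)) = E (e (k + 1)) := by
    intro k hk0 hk6 hk
    rw [e_succ_eq_bracket hk0 hk6, mem_derivations_c0.1 hD, mem_derivations_c0.1 hE, h0, hk]
  have h2 := step 1 (by decide) (by decide) h1
  have h3 := step 2 (by decide) (by decide) h2
  have h4 := step 3 (by decide) (by decide) h3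
  have h5 := step 4 (by decide) (by decide) h4
  have h6 := step 5 (by decide) (by decide) h5
  refine Module.End.ext_e fun k => ?_
  fin_cases k
  exacts [h0, h1, h2, h3, h4, h5, h6]

/-- Column `k` is `D (e k)`: columns `0` and `1` carry the free parameters, and the others are
forced by `D (e (k + 1)) = [D (e 0), e k] + [e 0, D (e k)]`. -/
def derivMatrix (a : Fin 10 → ℝ) : Matrix (Fin 7) (Fin 7) ℝ :=
  !![0, 0, 0, 0, 0, 0, 0;
     a 0, 0, 0, 0, 0, 0, 0;
     a 1, a 6, 0, 0, 0, 0, 0;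
     a 2, a 0 / 2, a 6, 0, 0, 0, 0;
     a 3, a 7, a 0 / 2, a 6, 0, 0, 0;
     a 4, a 8, a 7 - a 1, 3 / 2 * a 0, a 6, 0, 0;
     a 5, a 9, a 8 - a 2 - a 3, a 7 - a 1 + a 2, 5 / 2 * a 0 - a 1, a 0 + a 6, 0]

def derivMatrixₗ : (Fin 10 → ℝ) →ₗ[ℝ] Matrix (Fin 7) (Fin 7) ℝ where
  toFun := derivMatrix
  map_add' a b := by ext i j; fin_cases i <;> fin_cases j <;> simp [derivMatrix] <;> ring
  map_smul' r a := by ext i j; fin_cases i <;> fin_cases j <;> simp [derivMatrix] <;> ring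

theorem derivMatrix_eq_zero_of_le (a : Fin 10 → ℝ) (i j : Fin 7) (hij : i ≤ j) :
    derivMatrix a i j = 0 := by
  fin_cases i <;> fin_cases j <;> simp_all [derivMatrix]

theorem toLin'_derivMatrix_mem (a : Fin 10 → ℝ) :
    Matrix.toLin' (derivMatrix a) ∈ derivations c0 := by
  refine mem_derivations_c0.2 fun x y => ?_
  funext m
  fin_cases m <;> simp [derivMatrix, bracket, Matrix.mulVec, dotProduct, Fin.sum_univ_seven] <;> ring

def derivCoords : Module.End ℝ V7 →ₗ[ℝ] (Fin 10 → ℝ) where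
  toFun D := ![D (e 0) 1, D (e 0) 2, D (e 0) 3, D (e 0) 4, D (e 0) 5, D (e 0) 6,
    D (e 1) 2, D (e 1) 4, D (e 1) 5, D (e 1) 6]
  map_add' D E := by ext t; fin_cases t <;> rfl
  map_smul' r D := by ext t; fin_cases t <;> rfl

theorem derivCoords_toLin'_derivMatrix (a : Fin 10 → ℝ) :
    derivCoords (Matrix.toLin' (derivMatrix a)) = a := by
  ext t
  fin_cases t <;> simp [derivCoords, derivMatrix, e]

section Derivation

variable {D : Module.End ℝ V7} (hD : D ∈ derivations c0)
include hD

theorem derivation_eq_on_basis (i j m : Fin 7) :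
    ∑ k, bracket (e i) (e j) k * D (e k) m =
      bracket (D (e i)) (e j) m + bracket (e i) (D (e j)) m := by
  rw [← Module.End.apply_eq_sum_e, mem_derivations_c0.1 hD]
  rfl

theorem derivation_apply_e_one_zero : D (e 1) 0 = 0 := by
  have h₁ := derivation_eq_on_basis hD 1 3 4
  have h₂ := derivation_eq_on_basis hD 1 6 6
  have h₃ := derivation_eq_on_basis hD 2 6 6
  simp [bracket, e_apply, Fin.sum_univ_seven] at h₁ h₂ h₃
  linarith

theorem derivation_apply_e_zero_zero_and_e_one_one : D (e 0) 0 = 0 ∧ D (e 1) 1 = 0 := by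
  have h₀ := derivation_apply_e_one_zero hD
  have h₁ := derivation_eq_on_basis hD 0 2 3
  have h₂ := derivation_eq_on_basis hD 0 3 4
  have h₃ := derivation_eq_on_basis hD 0 4 4
  have h₄ := derivation_eq_on_basis hD 0 4 5
  have h₅ := derivation_eq_on_basis hD 0 5 6
  have h₆ := derivation_eq_on_basis hD 1 2 5
  have h₇ := derivation_eq_on_basis hD 1 4 6
  have h₈ := derivation_eq_on_basis hD 1 5 6
  have h₉ := derivation_eq_on_basis hD 1 6 6
  have h₁₀ := derivation_eq_on_basis hD 2 3 4
  have h₁₁ := derivation_eq_on_basis hD 2 5 6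
  have h₁₂ := derivation_eq_on_basis hD 2 6 6
  simp [bracket, e_apply, Fin.sum_univ_seven] at h₁ h₂ h₃ h₄ h₅ h₆ h₇ h₈ h₉ h₁₀ h₁₁ h₁₂
  constructor <;> linarith

theorem derivation_two_mul_apply_e_one_three : 2 * D (e 1) 3 = D (e 0) 1 := by
  have h₁ := derivation_eq_on_basis hD 0 1 4
  have h₂ := derivation_eq_on_basis hD 0 2 4
  have h₃ := derivation_eq_on_basis hD 0 3 5
  have h₄ := derivation_eq_on_basis hD 0 4 6
  have h₅ := derivation_eq_on_basis hD 1 2 6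
  simp [bracket, e_apply, Fin.sum_univ_seven] at h₁ h₂ h₃ h₄ h₅
  linarith

theorem toLin'_derivMatrix_derivCoords : Matrix.toLin' (derivMatrix (derivCoords D)) = D := by
  obtain ⟨h00, h11⟩ := derivation_apply_e_zero_zero_and_e_one_one hD
  have h10 := derivation_apply_e_one_zero hD
  have h13 := derivation_two_mul_apply_e_one_three hD
  refine derivation_ext (toLin'_derivMatrix_mem _) hD ?_ ?_ <;> funext m <;> fin_cases m <;>
    simp only [Matrix.toLin'_apply_e] <;> simp [derivCoords, derivMatrix, h00, h11, h10]
  linarith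

end Derivation

def derivationsEquiv : (Fin 10 → ℝ) ≃ₗ[ℝ] derivations c0 :=
  LinearEquiv.ofLinearMap
    ((Matrix.toLin'.toLinearMap ∘ₗ derivMatrixₗ).codRestrict _ toLin'_derivMatrix_mem)
    (derivCoords ∘ₗ (derivations c0).subtype)
    (LinearMap.ext fun D => Subtype.ext (toLin'_derivMatrix_derivCoords D.2))
    (LinearMap.ext derivCoords_toLin'_derivMatrix)

/-- The bracket satisfies the Jacobi identity (and is skew-symmetric), its space of
derivations has dimension 10, and every derivation is nilpotent, i.e. the Lie algebra
is characteristically nilpotent. -/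
theorem stmt :
    Skew c0 ∧ Jacobi c0 ∧
    Module.finrank ℝ ↥(derivations c0) = 10 ∧
    ∀ D ∈ derivations c0, IsNilpotent D := by
  refine ⟨skew_c0, jacobi_c0, ?_, fun D hD => ?_⟩
  · simp [← derivationsEquiv.finrank_eq]
  · rw [← toLin'_derivMatrix_derivCoords hD]
    exact Matrix.isNilpotent_toLin'_of_strictLowerTriangular _ (derivMatrix_eq_zero_of_le _)
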